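/- Let v1, v2, v3, v4 ∈ ℂ³ be vectors that are null with respect to the standard bilinear form (v·v = 0, where v·w = Σ v^a w^a), with all pairwise products v_i·v_j nonzero. Then ((v1·v2)(v3·v4))/((v1·v3)(v2·v4)) = r² and ((v1·v4)(v2·v3))/((v1·v3)(v2·v4)) = (1−r)², where r = ((v3·v4)[v1,v2,v3])/((v1·v3)[v2,v3,v4]) and [u,v,w] = ε_{abc}u^a v^b w^c is the determinant. -/

import Mathlib

/-- The complex bilinear dot product on `ℂ³` (no conjugation). -/
noncomputable def cdot (v w : Fin 3 → ℂ) : ℂ := ∑ a : Fin 3, v a * w a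

/-- The triple product `[u,v,w] = ε_{abc} u^a v^b w^c`, i.e. the determinant of the
matrix with rows `u, v, w`. -/
noncomputable def triple (u v w : Fin 3 → ℂ) : ℂ := Matrix.det (Matrix.of ![u, v, w])

/-
With `x_ij = v_i·v_j`, Cauchy–Binet writes `[v1,v2,v3]²`, `[v2,v3,v4]²` and `[v1,v2,v3][v2,v3,v4]`
as 3×3 determinants of dot products; nullity kills their diagonals, leaving
`[v1,v2,v3]² = 2 x12 x23 x13`, `[v2,v3,v4]² = 2 x23 x34 x24` and
`[v1,v2,v3][v2,v3,v4] = x23 (x12 x34 + x13 x24 - x14 x23)`.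
The first two give `r² = x12 x34 / (x13 x24)`, the third `2r = 1 + (x12 x34 - x14 x23) / (x13 x24)`,
and `(1 - r)² = 1 - 2r + r²` is then the second identity.
-/

open Matrix

theorem triple_mul_triple (u v w u' v' w' : Fin 3 → ℂ) :
    triple u v w * triple u' v' w' =
      det (of fun i j => cdot (![u, v, w] i) (![u', v', w'] j)) := by
  rw [triple, triple, ← det_transpose (of ![u', v', w']), ← det_mul]
  rfl

theorem cdot_comm (v w : Fin 3 → ℂ) : cdot v w = cdot w v := by
  simp only [cdot, mul_comm]

theorem triple_sq_of_null {u v w : Fin 3 → ℂ}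
    (hu : cdot u u = 0) (hv : cdot v v = 0) (hw : cdot w w = 0) :
    triple u v w ^ 2 = 2 * cdot u v * cdot v w * cdot u w := by
  rw [sq, triple_mul_triple, det_fin_three]
  simp only [of_apply, cons_val_zero, cons_val_one, cons_val_two, head_cons, tail_cons,
    hu, hv, hw, cdot_comm v u, cdot_comm w u, cdot_comm w v]
  ring

theorem triple_mul_triple_of_null (v1 : Fin 3 → ℂ) {v2 v3 : Fin 3 → ℂ} (v4 : Fin 3 → ℂ)
    (h2 : cdot v2 v2 = 0) (h3 : cdot v3 v3 = 0) :
    triple v1 v2 v3 * triple v2 v3 v4 = cdot v2 v3 *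
      (cdot v1 v2 * cdot v3 v4 + cdot v1 v3 * cdot v2 v4 - cdot v1 v4 * cdot v2 v3) := by
  rw [triple_mul_triple, det_fin_three]
  simp only [of_apply, cons_val_zero, cons_val_one, cons_val_two, head_cons, tail_cons,
    h2, h3, cdot_comm v3 v2]
  ring

theorem stmt_2_general (v1 v2 v3 v4 : Fin 3 → ℂ)
    (h1 : cdot v1 v1 = 0) (h2 : cdot v2 v2 = 0) (h3 : cdot v3 v3 = 0) (h4 : cdot v4 v4 = 0)
    (h13 : cdot v1 v3 ≠ 0) (h24 : cdot v2 v4 ≠ 0)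
    (hdet : triple v2 v3 v4 ≠ 0) :
    (cdot v1 v2 * cdot v3 v4) / (cdot v1 v3 * cdot v2 v4) =
      ((cdot v3 v4 * triple v1 v2 v3) / (cdot v1 v3 * triple v2 v3 v4)) ^ 2 ∧
    (cdot v1 v4 * cdot v2 v3) / (cdot v1 v3 * cdot v2 v4) =
      (1 - (cdot v3 v4 * triple v1 v2 v3) / (cdot v1 v3 * triple v2 v3 v4)) ^ 2 := by
  have sq123 := triple_sq_of_null h1 h2 h3
  have sq234 := triple_sq_of_null h2 h3 h4
  have prod := triple_mul_triple_of_null v1 v4 h2 h3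
  set r := (cdot v3 v4 * triple v1 v2 v3) / (cdot v1 v3 * triple v2 v3 v4) with hr_def
  have hr_sq : r ^ 2 = (cdot v1 v2 * cdot v3 v4) / (cdot v1 v3 * cdot v2 v4) := by
    rw [hr_def, div_pow, div_eq_div_iff (pow_ne_zero 2 (mul_ne_zero h13 hdet)) (mul_ne_zero h13 h24)]
    linear_combination (cdot v3 v4 ^ 2 * cdot v1 v3 * cdot v2 v4) * sq123
      - (cdot v1 v2 * cdot v3 v4 * cdot v1 v3 ^ 2) * sq234
  have hr : 2 * r = 1 + (cdot v1 v2 * cdot v3 v4) / (cdot v1 v3 * cdot v2 v4)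
      - (cdot v1 v4 * cdot v2 v3) / (cdot v1 v3 * cdot v2 v4) := by
    rw [hr_def]
    field_simp
    refine mul_left_cancel₀ hdet ?_
    linear_combination (2 * cdot v3 v4 * cdot v2 v4) * prod
      - (cdot v1 v3 * cdot v2 v4 + cdot v1 v2 * cdot v3 v4 - cdot v1 v4 * cdot v2 v3) * sq234
  refine ⟨hr_sq.symm, ?_⟩
  linear_combination hr - hr_sq

/-- For four null vectors `v1, v2, v3, v4 ∈ ℂ³` with nonzero pairwise dot products and
`[v2,v3,v4] ≠ 0`, setting `r = ((v3·v4)[v1,v2,v3])/((v1·v3)[v2,v3,v4])`, one has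
`((v1·v2)(v3·v4))/((v1·v3)(v2·v4)) = r²` and `((v1·v4)(v2·v3))/((v1·v3)(v2·v4)) = (1−r)²`. -/
theorem stmt_2 (v1 v2 v3 v4 : Fin 3 → ℂ)
    (h1 : cdot v1 v1 = 0) (h2 : cdot v2 v2 = 0) (h3 : cdot v3 v3 = 0) (h4 : cdot v4 v4 = 0)
    (h12 : cdot v1 v2 ≠ 0) (h13 : cdot v1 v3 ≠ 0) (h14 : cdot v1 v4 ≠ 0)
    (h23 : cdot v2 v3 ≠ 0) (h24 : cdot v2 v4 ≠ 0) (h34 : cdot v3 v4 ≠ 0)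
    (hdet : triple v2 v3 v4 ≠ 0) :
    (cdot v1 v2 * cdot v3 v4) / (cdot v1 v3 * cdot v2 v4) =
      ((cdot v3 v4 * triple v1 v2 v3) / (cdot v1 v3 * triple v2 v3 v4)) ^ 2 ∧
    (cdot v1 v4 * cdot v2 v3) / (cdot v1 v3 * cdot v2 v4) =
      (1 - (cdot v3 v4 * triple v1 v2 v3) / (cdot v1 v3 * triple v2 v3 v4)) ^ 2 :=
  stmt_2_general v1 v2 v3 v4 h1 h2 h3 h4 h13 h24 hdet
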